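/- arXiv:1805.04063 — 5 statements merged into one kernel-verified Lean document; each statement's English description precedes it below -/
import Mathlib

section
/- Let Λ be a unimodular lattice, let T ⊆ Λ be a primitive sublattice on which the restricted bilinear form is nondegenerate, and let M = T^⊥. Then the discriminant groups A_T and A_M are isomorphic as abelian groups. -/
open Matrix

namespace MaxAlg

/-- Orthogonal direct sum of two Gram matrices. -/
def dsum {ι κ : Type*} (M : Matrix ι ι ℤ) (N : Matrix κ κ ℤ) : Matrix (ι ⊕ κ) (ι ⊕ κ) ℤ :=
  Matrix.fromBlocks M 0 0 N

/-- The hyperbolic plane U. -/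
def U : Matrix (Fin 2) (Fin 2) ℤ := !![0, 1; 1, 0]

/-- The root lattice A₂ (Cartan matrix). -/
def A2 : Matrix (Fin 2) (Fin 2) ℤ := !![2, -1; -1, 2]

/-- The root lattice D₄ (Cartan matrix). -/
def D4 : Matrix (Fin 4) (Fin 4) ℤ := !![2, -1, 0, 0; -1, 2, -1, -1; 0, -1, 2, 0; 0, -1, 0, 2]

/-- The root lattice E₆ (Cartan matrix). -/
def E6 : Matrix (Fin 6) (Fin 6) ℤ := CartanMatrix.E₆

/-- The root lattice E₈ (Cartan matrix). -/
def E8 : Matrix (Fin 8) (Fin 8) ℤ := CartanMatrix.E₈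

abbrev K3Ix : Type := (Fin 8 ⊕ Fin 8) ⊕ (Fin 2 ⊕ (Fin 2 ⊕ Fin 2))

/-- The K3 lattice (E₈)² ⊕ U³. -/
def K3 : Matrix K3Ix K3Ix ℤ := dsum (dsum E8 E8) (dsum U (dsum U U))

abbrev Λ0Ix : Type := Fin 2 ⊕ ((Fin 8 ⊕ Fin 8) ⊕ (Fin 2 ⊕ Fin 2))

/-- Λ₀ = A₂ ⊕ (E₈)² ⊕ U². -/
def Λ0 : Matrix Λ0Ix Λ0Ix ℤ := dsum A2 (dsum (dsum E8 E8) (dsum U U))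

abbrev T0Ix : Type := (Fin 4 ⊕ (Fin 4 ⊕ Fin 4)) ⊕ (Fin 2 ⊕ Fin 2)

/-- The lattice (D₄)³ ⊕ U². -/
def T0 : Matrix T0Ix T0Ix ℤ := dsum (dsum D4 (dsum D4 D4)) (dsum U U)

/-- The odd unimodular lattice I_{21,2} = diag(1,…,1,−1,−1). -/
def I212 : Matrix (Fin 23) (Fin 23) ℤ := Matrix.diagonal fun i => if (i : ℕ) < 21 then 1 else -1

variable {ι κ : Type*} [Fintype ι] [Fintype κ]

/-- The map `v ↦ ⟨v,-⟩` from a Gram lattice to its dual `Hom(L,ℤ)`. -/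
def toDual (M : Matrix ι ι ℤ) : (ι → ℤ) →ₗ[ℤ] Module.Dual ℤ (ι → ℤ) where
  toFun v :=
    { toFun := fun w => v ⬝ᵥ M.mulVec w
      map_add' := fun a b => by simp [Matrix.mulVec_add, dotProduct_add]
      map_smul' := fun c a => by
        show v ⬝ᵥ M.mulVec (c • a) = c • (v ⬝ᵥ M.mulVec a)
        rw [Matrix.mulVec_smul, dotProduct_smul] }
  map_add' a b := by ext w; simp [add_dotProduct]
  map_smul' c a := by
    ext w
    simp only [LinearMap.coe_mk, AddHom.coe_mk, LinearMap.smul_apply, RingHom.id_apply,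
      smul_dotProduct, smul_eq_mul]

/-- The discriminant group A_L := Hom(L,ℤ)/im(L → Hom(L,ℤ)). -/
abbrev DiscGroup (M : Matrix ι ι ℤ) : Type _ :=
  Module.Dual ℤ (ι → ℤ) ⧸ LinearMap.range (toDual M)

/-- Minimal number of generators of an abelian group. -/
noncomputable def minGens (A : Type*) [AddCommGroup A] : ℕ :=
  sInf {k | ∃ S : Finset A, S.card = k ∧ AddSubgroup.closure (S : Set A) = ⊤}

/-- Orthogonal complement of a set of vectors in a Gram lattice. -/
def orthComp (M : Matrix ι ι ℤ) (s : Set (ι → ℤ)) : Submodule ℤ (ι → ℤ) where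
  carrier := {v | ∀ t ∈ s, v ⬝ᵥ M.mulVec t = 0}
  add_mem' := fun ha hb t ht => by simp [add_dotProduct, ha t ht, hb t ht]
  zero_mem' := fun t ht => by simp
  smul_mem' := fun c a ha t ht => by rw [smul_dotProduct, ha t ht, smul_zero]

/-- A submodule is primitive if the quotient by it is torsion-free. -/
def IsPrimitiveSubmodule (p : Submodule ℤ (ι → ℤ)) : Prop :=
  ∀ (v : ι → ℤ) (k : ℤ), k ≠ 0 → k • v ∈ p → v ∈ p

/-- The restriction of the form of `M` to a submodule, as a map into the dual. -/
def subToDual (M : Matrix ι ι ℤ) (p : Submodule ℤ (ι → ℤ)) : ↥p →ₗ[ℤ] Module.Dual ℤ ↥p :=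
  (p.subtype.dualMap) ∘ₗ ((toDual M) ∘ₗ p.subtype)

/-- Discriminant group of a (sub)lattice `p ⊆ L` with the restricted form. -/
abbrev DiscGroupSub (M : Matrix ι ι ℤ) (p : Submodule ℤ (ι → ℤ)) : Type _ :=
  Module.Dual ℤ ↥p ⧸ LinearMap.range (subToDual M p)

/-- A primitive isometric embedding of the lattice with Gram matrix `M` into the one
with Gram matrix `N`. -/
def IsPrimitiveEmbedding (M : Matrix ι ι ℤ) (N : Matrix κ κ ℤ)
    (f : (ι → ℤ) →ₗ[ℤ] (κ → ℤ)) : Prop :=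
  Function.Injective f ∧
  (∀ v w, f v ⬝ᵥ N.mulVec (f w) = v ⬝ᵥ M.mulVec w) ∧
  ∀ (v : κ → ℤ) (k : ℤ), k ≠ 0 → k • v ∈ LinearMap.range f → v ∈ LinearMap.range f

/-- Two Gram lattices are isometric. -/
def LatticeIsometric (M : Matrix ι ι ℤ) (N : Matrix κ κ ℤ) : Prop :=
  ∃ e : (ι → ℤ) ≃ₗ[ℤ] (κ → ℤ), ∀ v w, e v ⬝ᵥ N.mulVec (e w) = v ⬝ᵥ M.mulVec w

/-- An even lattice. -/
def IsEvenMatrix (M : Matrix ι ι ℤ) : Prop := ∀ v : ι → ℤ, 2 ∣ v ⬝ᵥ M.mulVec v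

/-- The lattice has signature (p,q): over ℝ the form is equivalent to the diagonal
form with `p` entries `+1` and `q` entries `−1`. -/
def HasSignature {n : ℕ} (M : Matrix (Fin n) (Fin n) ℤ) (p q : ℕ) : Prop :=
  p + q = n ∧ ∃ P : Matrix (Fin n) (Fin n) ℝ, IsUnit P.det ∧
    Pᵀ * (M.map (Int.cast : ℤ → ℝ)) * P =
      Matrix.diagonal (fun i : Fin n => if (i : ℕ) < p then (1 : ℝ) else -1)

end MaxAlg

namespace MaxAlg

variable {L : Type*} [AddCommGroup L]

/-- Orthogonal complement of a submodule with respect to a bilinear form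
`B : L →ₗ[ℤ] Hom(L,ℤ)`. -/
def orthB (B : L →ₗ[ℤ] Module.Dual ℤ L) (T : Submodule ℤ L) : Submodule ℤ L where
  carrier := {v | ∀ t ∈ T, B v t = 0}
  add_mem' := fun ha hb t ht => by simp [ha t ht, hb t ht]
  zero_mem' := fun t ht => by simp
  smul_mem' := fun c a ha t ht => by simp [ha t ht]

/-- The restriction of the form `B` to a submodule `p`, as a map `p → Hom(p,ℤ)`. -/
def restrictB (B : L →ₗ[ℤ] Module.Dual ℤ L) (p : Submodule ℤ L) :
    ↥p →ₗ[ℤ] Module.Dual ℤ ↥p :=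
  (p.subtype.dualMap) ∘ₗ (B ∘ₗ p.subtype)

/-- The discriminant group A_p = Hom(p,ℤ)/im(p → Hom(p,ℤ)) of a sublattice `p`
with the restricted form. -/
abbrev DiscB (B : L →ₗ[ℤ] Module.Dual ℤ L) (p : Submodule ℤ L) : Type _ :=
  Module.Dual ℤ ↥p ⧸ LinearMap.range (restrictB B p)

end MaxAlg

/-!
A primitive sublattice `p` of `Λ` is a direct summand, so when `B : Λ → Hom(Λ, ℤ)` is onto,
restricting functionals gives a surjection `Λ → Hom(p, ℤ)`; modulo the image of `p`, its kernel
is `p + p^⊥`. Hence `A_p ≅ Λ / (p + p^⊥)` for every primitive `p`. The complement `T^⊥` is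
primitive, and nondegeneracy of `T` makes `T + T^⊥` of finite index, which forces `T^⊥⊥ = T`.
So `A_T` and `A_{T^⊥}` are both isomorphic to `Λ / (T + T^⊥)`.
-/

open Module

theorem Submodule.dualMap_subtype_surjective {R M : Type*} [CommRing R] [AddCommGroup M]
    [Module R M] (p : Submodule R M) [Projective R (M ⧸ p)] :
    Function.Surjective p.subtype.dualMap := by
  obtain ⟨r, hr⟩ := ((Function.Exact.split_tfae (LinearMap.exact_subtype_mkQ p)
    p.injective_subtype p.mkQ_surjective).out 0 1).mp
    (p.mkQ.exists_rightInverse_of_surjective p.range_mkQ)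
  refine fun f => ⟨f ∘ₗ r, ?_⟩
  rw [LinearMap.dualMap_apply', LinearMap.comp_assoc, hr, LinearMap.comp_id]

theorem Submodule.isTorsionFree_quotient {R M : Type*} [CommRing R] [IsDomain R] [AddCommGroup M]
    [Module R M] (p : Submodule R M) (hp : ∀ (v : M) (k : R), k ≠ 0 → k • v ∈ p → v ∈ p) :
    IsTorsionFree R (M ⧸ p) := by
  refine isTorsionFree_iff_smul_eq_zero.mpr fun k x hkx => or_iff_not_imp_left.mpr
    fun hk => ?_
  induction x using Submodule.Quotient.induction_on with | H v => ?_
  rw [← Submodule.Quotient.mk_smul, Submodule.Quotient.mk_eq_zero] at hkx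
  rw [Submodule.Quotient.mk_eq_zero]
  exact hp v k hk hkx

theorem LinearMap.exists_smul_mem_range_of_injective {R M N : Type*} [CommRing R] [IsDomain R]
    [AddCommGroup M] [Module R M] [AddCommGroup N] [Module R N] [Module.Finite R N]
    (f : M →ₗ[R] N) (hf : Function.Injective f) (hrank : finrank R M = finrank R N) (y : N) :
    ∃ a : R, a ≠ 0 ∧ a • y ∈ range f := by
  have hquot : finrank R (N ⧸ range f) = 0 := by
    have := (range f).finrank_quotient_add_finrank
    rw [finrank_range_of_inj hf, hrank] at this
    omega
  obtain ⟨a, ha, hay⟩ := finrank_eq_zero_iff.mp hquot (Submodule.Quotient.mk y)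
  exact ⟨a, ha, (Submodule.Quotient.mk_eq_zero _).mp (by rwa [Submodule.Quotient.mk_smul])⟩

namespace MaxAlg

section

variable {Λ : Type*} [AddCommGroup Λ] (B : Λ →ₗ[ℤ] Dual ℤ Λ)

def restrictDual (p : Submodule ℤ Λ) : Λ →ₗ[ℤ] Dual ℤ p :=
  p.subtype.dualMap ∘ₗ B

theorem ker_mkQ_comp_restrictDual (p : Submodule ℤ Λ) :
    LinearMap.ker ((LinearMap.range (restrictB B p)).mkQ ∘ₗ restrictDual B p) = p ⊔ orthB B p := by
  ext v
  simp only [LinearMap.mem_ker, LinearMap.comp_apply, Submodule.mkQ_apply,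
    Submodule.Quotient.mk_eq_zero, LinearMap.mem_range, Submodule.mem_sup]
  constructor
  · rintro ⟨t, ht⟩
    refine ⟨t, t.2, v - t, fun w hw => ?_, add_sub_cancel _ _⟩
    have := LinearMap.congr_fun ht ⟨w, hw⟩
    simp only [restrictB, restrictDual, LinearMap.comp_apply, LinearMap.dualMap_apply,
      Submodule.subtype_apply] at this
    simp [this]
  · rintro ⟨t, ht, m, hm, rfl⟩
    refine ⟨⟨t, ht⟩, LinearMap.ext fun x => ?_⟩
    simp [restrictB, restrictDual, hm x x.2]

theorem orthB_primitive (p : Submodule ℤ Λ) :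
    ∀ (v : Λ) (k : ℤ), k ≠ 0 → k • v ∈ orthB B p → v ∈ orthB B p :=
  fun _ _ hk hkv t ht => by simpa [hk] using hkv t ht

theorem le_orthB_orthB (hsymm : ∀ v w : Λ, B v w = B w v) (p : Submodule ℤ Λ) :
    p ≤ orthB B (orthB B p) :=
  fun t ht m hm => by rw [hsymm]; exact hm t ht

theorem restrictB_injective (T : Submodule ℤ Λ)
    (hnondeg : ∀ v ∈ T, (∀ w ∈ T, B v w = 0) → v = 0) :
    Function.Injective (restrictB B T) := by
  rw [← LinearMap.ker_eq_bot, Submodule.eq_bot_iff]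
  exact fun t ht => Subtype.ext <| hnondeg t t.2 fun w hw => LinearMap.congr_fun ht ⟨w, hw⟩

variable [Module.Finite ℤ Λ]

noncomputable def quotSupOrthBEquivDiscB (hB : Function.Surjective B) (p : Submodule ℤ Λ)
    (hp : ∀ (v : Λ) (k : ℤ), k ≠ 0 → k • v ∈ p → v ∈ p) :
    (Λ ⧸ (p ⊔ orthB B p)) ≃ₗ[ℤ] DiscB B p :=
  have := p.isTorsionFree_quotient hp
  (Submodule.quotEquivOfEq _ _ (ker_mkQ_comp_restrictDual B p).symm).trans
    (LinearMap.quotKerEquivOfSurjective _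
      ((Submodule.mkQ_surjective _).comp (p.dualMap_subtype_surjective.comp hB)))

variable [Module.Free ℤ Λ]

theorem exists_smul_mem_sup_orthB (T : Submodule ℤ Λ)
    (hnondeg : ∀ v ∈ T, (∀ w ∈ T, B v w = 0) → v = 0) (v : Λ) :
    ∃ n : ℤ, n ≠ 0 ∧ n • v ∈ T ⊔ orthB B T := by
  -- `restrictB B T` embeds `T` into its dual, of the same rank, so its cokernel is torsion.
  obtain ⟨n, hn, hnv⟩ := (restrictB B T).exists_smul_mem_range_of_injective
    (restrictB_injective B T hnondeg)
    (Module.Free.chooseBasis ℤ T).toDualEquiv.finrank_eq (restrictDual B T v)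
  refine ⟨n, hn, ?_⟩
  rw [← ker_mkQ_comp_restrictDual, LinearMap.mem_ker, LinearMap.comp_apply, map_smul,
    Submodule.mkQ_apply, Submodule.Quotient.mk_eq_zero]
  exact hnv

theorem eq_zero_of_sup_orthB_le_ker (T : Submodule ℤ Λ)
    (hnondeg : ∀ v ∈ T, (∀ w ∈ T, B v w = 0) → v = 0) (f : Dual ℤ Λ)
    (hf : T ⊔ orthB B T ≤ LinearMap.ker f) : f = 0 := by
  ext w
  obtain ⟨n, hn, hnw⟩ := exists_smul_mem_sup_orthB B T hnondeg w
  simpa [hn] using hf hnw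

theorem orthB_orthB (hB : Function.Injective B) (hsymm : ∀ v w : Λ, B v w = B w v)
    (T : Submodule ℤ Λ) (hprim : ∀ (v : Λ) (k : ℤ), k ≠ 0 → k • v ∈ T → v ∈ T)
    (hnondeg : ∀ v ∈ T, (∀ w ∈ T, B v w = 0) → v = 0) :
    orthB B (orthB B T) = T := by
  refine le_antisymm (fun v hv => ?_) (le_orthB_orthB B hsymm T)
  obtain ⟨n, hn, hnv⟩ := exists_smul_mem_sup_orthB B T hnondeg v
  obtain ⟨t, ht, m, hm, hnv⟩ := Submodule.mem_sup.mp hnv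
  suffices hm0 : B m = 0 by
    rw [hB.eq_iff' (map_zero B)] at hm0
    exact hprim v n hn (by rw [← hnv, hm0, add_zero]; exact ht)
  refine eq_zero_of_sup_orthB_le_ker B T hnondeg _ (sup_le (fun w hw => hm w hw) fun w hw => ?_)
  have hm' : m = n • v - t := by rw [← hnv, add_sub_cancel_left]
  simp [hm', hv w hw, hsymm t w, hw t ht]

end

/-- If `Λ` is a unimodular lattice, `T ⊆ Λ` a primitive sublattice on which the
restricted form is nondegenerate, and `M = T^⊥`, then `A_T ≅ A_M` as abelian groups. -/
theorem discGroup_iso_orthComp_of_unimodular (Λ : Type*) [AddCommGroup Λ]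
    [Module.Free ℤ Λ] [Module.Finite ℤ Λ]
    (B : Λ →ₗ[ℤ] Module.Dual ℤ Λ)
    (hsymm : ∀ v w : Λ, B v w = B w v)
    (hunimodular : Function.Bijective B)
    (T : Submodule ℤ Λ)
    (hprim : ∀ (v : Λ) (k : ℤ), k ≠ 0 → k • v ∈ T → v ∈ T)
    (hnondeg : ∀ v ∈ T, (∀ w ∈ T, B v w = 0) → v = 0) :
    Nonempty (DiscB B T ≃+ DiscB B (orthB B T)) := by
  have hsup : T ⊔ orthB B T = orthB B T ⊔ orthB B (orthB B T) := by
    rw [orthB_orthB B hunimodular.1 hsymm T hprim hnondeg, sup_comm]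
  exact ⟨((quotSupOrthBEquivDiscB B hunimodular.2 T hprim).symm ≪≫ₗ
    Submodule.quotEquivOfEq _ _ hsup ≪≫ₗ
    quotSupOrthBEquivDiscB B hunimodular.2 _ (orthB_primitive B T)).toAddEquiv⟩

end MaxAlg
end

section
/- Let T be a primitive sublattice of the K3 lattice (E8)² ⊕ U³ on which the bilinear form is nondegenerate. Then l(A_T) ≤ min(rank T, 22 − rank T). -/
open Matrix

/-!
The discriminant group `A_T = T^∨ / T` is a quotient of `T^∨ ≅ ℤ^{rk T}`. Since `T` is primitive,
`L / T` is free, so restriction `L^∨ → T^∨` is onto; since the K3 lattice `L` is unimodular,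
`L → L^∨` is onto. Hence `L → A_T` is onto, and it kills `T`, so `A_T` is also a quotient of
`L / T ≅ ℤ^{22 - rk T}`.
-/

namespace MaxAlg

section Discriminant

variable {ι : Type*}

lemma minGens_le_finrank_of_surjective {M A : Type*} [AddCommGroup M] [Module.Free ℤ M]
    [Module.Finite ℤ M] [AddCommGroup A] (f : M →+ A) (hf : Function.Surjective f) :
    minGens A ≤ Module.finrank ℤ M := by
  classical
  let b := Module.finBasis ℤ M
  have hspan : AddSubgroup.closure (Set.range fun i => f (b i)) = ⊤ := by
    apply AddSubgroup.toIntSubmodule.injective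
    rw [AddSubgroup.toIntSubmodule_closure, Set.range_comp' f b, ← f.coe_toIntLinearMap,
      Submodule.span_image, b.span_eq, Submodule.map_top,
      LinearMap.range_eq_top.2 hf, map_top]
  calc minGens A ≤ (Finset.univ.image fun i => f (b i)).card :=
        Nat.sInf_le ⟨_, rfl, by simpa using hspan⟩
    _ ≤ Module.finrank ℤ M := Finset.card_image_le.trans (by simp)

lemma IsPrimitiveSubmodule.isTorsionFree_quotient {p : Submodule ℤ (ι → ℤ)}
    (hp : IsPrimitiveSubmodule p) : Module.IsTorsionFree ℤ ((ι → ℤ) ⧸ p) := by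
  refine .of_smul_eq_zero fun k x hkx => or_iff_not_imp_left.2 fun hk => ?_
  obtain ⟨v, rfl⟩ := p.mkQ_surjective x
  rw [← map_smul] at hkx
  rw [Submodule.mkQ_apply, Submodule.Quotient.mk_eq_zero] at hkx ⊢
  exact hp v k hk hkx

lemma IsPrimitiveSubmodule.exists_retraction [Finite ι] {p : Submodule ℤ (ι → ℤ)}
    (hp : IsPrimitiveSubmodule p) : ∃ π : (ι → ℤ) →ₗ[ℤ] p, π ∘ₗ p.subtype = LinearMap.id := by
  -- `(ι → ℤ) ⧸ p` is finitely generated and torsion-free, hence free, so `p.mkQ` splits.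
  have : Module.IsTorsionFree ℤ ((ι → ℤ) ⧸ p) := hp.isTorsionFree_quotient
  obtain ⟨s, hs⟩ := p.mkQ.exists_rightInverse_of_surjective p.range_mkQ
  have hmem (x : ι → ℤ) : x - s (p.mkQ x) ∈ p := by
    rw [← Submodule.Quotient.mk_eq_zero, ← Submodule.mkQ_apply, map_sub, ← LinearMap.comp_apply,
      hs, LinearMap.id_apply, sub_self]
  refine ⟨(LinearMap.id - s ∘ₗ p.mkQ).codRestrict p hmem, LinearMap.ext fun t => ?_⟩
  ext1
  simp [(Submodule.Quotient.mk_eq_zero p).2 t.2]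

lemma IsPrimitiveSubmodule.dualMap_subtype_surjective [Finite ι] {p : Submodule ℤ (ι → ℤ)}
    (hp : IsPrimitiveSubmodule p) : Function.Surjective p.subtype.dualMap := by
  obtain ⟨π, hπ⟩ := hp.exists_retraction
  refine fun g => ⟨π.dualMap g, ?_⟩
  rw [← LinearMap.comp_apply, LinearMap.dualMap_comp_dualMap, hπ, LinearMap.dualMap_id,
    LinearMap.id_apply]

lemma minGens_discGroupSub_le_finrank [Fintype ι] (M : Matrix ι ι ℤ) (p : Submodule ℤ (ι → ℤ)) :
    minGens (DiscGroupSub M p) ≤ Module.finrank ℤ p := by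
  calc minGens (DiscGroupSub M p) ≤ Module.finrank ℤ (Module.Dual ℤ p) :=
        minGens_le_finrank_of_surjective (Submodule.mkQ _).toAddMonoidHom
          (Submodule.mkQ_surjective _)
    _ = Module.finrank ℤ p := (Module.finBasis ℤ p).toDualEquiv.finrank_eq.symm

lemma minGens_discGroupSub_le_finrank_quotient [Fintype ι] {M : Matrix ι ι ℤ}
    (hM : Function.Surjective (toDual M)) {p : Submodule ℤ (ι → ℤ)}
    (hp : IsPrimitiveSubmodule p) :
    minGens (DiscGroupSub M p) ≤ Module.finrank ℤ ((ι → ℤ) ⧸ p) := by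
  have : Module.IsTorsionFree ℤ ((ι → ℤ) ⧸ p) := hp.isTorsionFree_quotient
  let g : (ι → ℤ) →ₗ[ℤ] DiscGroupSub M p :=
    (LinearMap.range (subToDual M p)).mkQ ∘ₗ p.subtype.dualMap ∘ₗ toDual M
  have hg : Function.Surjective g :=
    (Submodule.mkQ_surjective _).comp (hp.dualMap_subtype_surjective.comp hM)
  have hker : p ≤ LinearMap.ker g := fun v hv =>
    (Submodule.Quotient.mk_eq_zero _).2 (LinearMap.mem_range_self (subToDual M p) ⟨v, hv⟩)
  refine minGens_le_finrank_of_surjective (p.liftQ g hker).toAddMonoidHom ?_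
  exact LinearMap.range_eq_top.1 (by rw [Submodule.range_liftQ, LinearMap.range_eq_top.2 hg])

lemma toDual_surjective_of_mul_eq_one [Fintype ι] [DecidableEq ι] {M N : Matrix ι ι ℤ}
    (h : N * M = 1) : Function.Surjective (toDual M) := fun f => by
  obtain ⟨c, rfl⟩ := (dotProductEquiv ℤ ι).surjective f
  refine ⟨c ᵥ* N, LinearMap.ext fun w => ?_⟩
  change c ᵥ* N ⬝ᵥ M *ᵥ w = c ⬝ᵥ w
  rw [dotProduct_mulVec, vecMul_vecMul, h, vecMul_one]

end Discriminant

section K3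

def E8Inv : Matrix (Fin 8) (Fin 8) ℤ :=
  !![4, 5, 7, 10, 8, 6, 4, 2;
     5, 8, 10, 15, 12, 9, 6, 3;
     7, 10, 14, 20, 16, 12, 8, 4;
     10, 15, 20, 30, 24, 18, 12, 6;
     8, 12, 16, 24, 20, 15, 10, 5;
     6, 9, 12, 18, 15, 12, 8, 4;
     4, 6, 8, 12, 10, 8, 6, 3;
     2, 3, 4, 6, 5, 4, 3, 2]

lemma E8Inv_mul_E8 : E8Inv * E8 = 1 := by decide

lemma U_mul_U : U * U = 1 := by decide

lemma dsum_mul_dsum {ι κ : Type*} [Fintype ι] [Fintype κ] [DecidableEq ι] [DecidableEq κ]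
    {M M' : Matrix ι ι ℤ} {N N' : Matrix κ κ ℤ} (hM : M * M' = 1) (hN : N * N' = 1) :
    dsum M N * dsum M' N' = 1 := by
  simp [dsum, fromBlocks_multiply, hM, hN, ← fromBlocks_one]

def K3Inv : Matrix K3Ix K3Ix ℤ := dsum (dsum E8Inv E8Inv) (dsum U (dsum U U))

lemma K3Inv_mul_K3 : K3Inv * K3 = 1 :=
  dsum_mul_dsum (dsum_mul_dsum E8Inv_mul_E8 E8Inv_mul_E8)
    (dsum_mul_dsum U_mul_U (dsum_mul_dsum U_mul_U U_mul_U))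

end K3

theorem minGens_le_of_primitive_in_K3_general (T : Submodule ℤ (K3Ix → ℤ))
    (hprim : IsPrimitiveSubmodule T) :
    minGens (DiscGroupSub K3 T) ≤
      min (Module.finrank ℤ ↥T) (22 - Module.finrank ℤ ↥T) := by
  refine le_min (minGens_discGroupSub_le_finrank K3 T) ?_
  calc minGens (DiscGroupSub K3 T) ≤ Module.finrank ℤ ((K3Ix → ℤ) ⧸ T) :=
        minGens_discGroupSub_le_finrank_quotient
          (toDual_surjective_of_mul_eq_one K3Inv_mul_K3) hprim
    _ = 22 - Module.finrank ℤ T := by simp [Submodule.finrank_quotient]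

/-- For a primitive sublattice `T` of the K3 lattice `(E8)² ⊕ U³` on which the
form is nondegenerate, `l(A_T) ≤ min(rank T, 22 − rank T)`. -/
theorem minGens_le_of_primitive_in_K3 (T : Submodule ℤ (K3Ix → ℤ))
    (hprim : IsPrimitiveSubmodule T)
    (hnondeg : ∀ v ∈ T, (∀ w ∈ T, v ⬝ᵥ K3.mulVec w = 0) → v = 0) :
    minGens (DiscGroupSub K3 T) ≤
      min (Module.finrank ℤ ↥T) (22 - Module.finrank ℤ ↥T) :=
  minGens_le_of_primitive_in_K3_general T hprim

end MaxAlg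
end

section
/- The lattice (D4)³ ⊕ U² admits no primitive isometric embedding into the K3 lattice (E8)² ⊕ U³. -/
open Matrix

/-
Reduce modulo 2. On `L / 2L` an even lattice `L` carries the quadratic form `q(v) = ⟨v, v⟩ / 2`,
whose polar form is `⟨-, -⟩ mod 2`, and its Gauss sum `G(L) = ∑ (-1)^q(x)` is multiplicative
under `⊕`. Since `G(E₈) = 16`, `G(U) = 2` and `G(D₄) = -8`, we get `G(K3) = 2¹¹` and
`G((D₄)³ ⊕ U²) = -2¹¹`. A primitive embedding `T ↪ L` stays injective modulo 2 and respects
`q`.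
When `⟨-, -⟩` is nondegenerate on `L / 2L`, summing `(-1)^(q(x) + ⟨x, y⟩)` over
`x ∈ L / 2L`, `y ∈ T / 2T` in both orders gives `G(L) G(T) = |T / 2T| ∑_{x ⊥ T} (-1)^q(x)`.
The last sum has `|L / 2L| / |T / 2T|` terms, and the one at `x = 0` is `+1`, so
`G(L) G(T) > -|L / 2L|`. But for `L = K3` and `T = (D₄)³ ⊕ U²`,
`G(L) G(T) = -2²² = -|L / 2L|`.
-/

namespace MaxAlg

open Matrix Finset

def sign₂ (a : ZMod 2) : ℤ := if a = 0 then 1 else -1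

@[simp] lemma sign₂_zero : sign₂ 0 = 1 := rfl

lemma sign₂_add : ∀ a b : ZMod 2, sign₂ (a + b) = sign₂ a * sign₂ b := by decide

lemma sign₂_of_ne_zero : ∀ a : ZMod 2, a ≠ 0 → sign₂ a = -1 := by decide

lemma sign₂_mul_self : ∀ a : ZMod 2, sign₂ a * sign₂ a = 1 := by decide

lemma neg_one_le_sign₂ : ∀ a : ZMod 2, -1 ≤ sign₂ a := by decide

section QuadraticFormsModTwo

variable {ι κ : Type*} [Fintype ι] [DecidableEq ι] [Fintype κ] [DecidableEq κ]

lemma sum_sign₂_dotProduct (c : ι → ZMod 2) :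
    ∑ y, sign₂ (c ⬝ᵥ y) = if c = 0 then 2 ^ Fintype.card ι else 0 := by
  split_ifs with hc
  · simp [hc, Fintype.card_pi]
  obtain ⟨i, hi⟩ := Function.ne_iff.mp hc
  -- translating by `Pi.single i 1` flips the sign of every term
  have hflip : ∑ y, sign₂ (c ⬝ᵥ y) = ∑ y, -sign₂ (c ⬝ᵥ y) :=
    Fintype.sum_equiv (Equiv.addRight (Pi.single i 1)) _ _ fun y => by
      simp [dotProduct_add, sign₂_add, sign₂_of_ne_zero _ hi]
  rw [Finset.sum_neg_distrib] at hflip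
  omega

lemma neg_card_lt_sum_sign₂ {α : Type*} [DecidableEq α] {s : Finset α} {f : α → ZMod 2}
    {a : α} (ha : a ∈ s) (hfa : f a = 0) : -(#s : ℤ) < ∑ x ∈ s, sign₂ (f x) := by
  have hrest : ∑ _x ∈ s.erase a, (-1 : ℤ) ≤ ∑ x ∈ s.erase a, sign₂ (f x) :=
    Finset.sum_le_sum fun x _ => neg_one_le_sign₂ (f x)
  rw [Finset.sum_const, Finset.card_erase_of_mem ha, smul_neg, nsmul_one] at hrest
  rw [← Finset.add_sum_erase s _ ha, hfa, sign₂_zero]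
  have := Finset.card_pos.mpr ⟨a, ha⟩
  push_cast [Nat.cast_sub this] at hrest
  omega

omit [DecidableEq ι] in
lemma card_vecMul_eq_zero {K : Type*} [Field K] [Fintype K] [DecidableEq K]
    (C : Matrix κ ι K) :
    #{x : κ → K | x ᵥ* C = 0} = Fintype.card K ^ (Fintype.card κ - C.rank) := by
  have hker : #{x : κ → K | x ᵥ* C = 0} = Nat.card (LinearMap.ker Cᵀ.mulVecLin) := by
    rw [← Fintype.card_subtype, ← Nat.card_eq_fintype_card]
    exact Nat.card_congr (Equiv.subtypeEquivRight fun x => by simp)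
  have hnullity := LinearMap.finrank_range_add_finrank_ker Cᵀ.mulVecLin
  rw [← Matrix.rank, rank_transpose, Module.finrank_fintype_fun_eq_card] at hnullity
  rw [hker, Module.natCard_eq_pow_finrank (K := K), Nat.card_eq_fintype_card, ← hnullity,
    Nat.add_sub_cancel_left]

def HasPolarMatrix (Q : (κ → ZMod 2) → ZMod 2) (B : Matrix κ κ (ZMod 2)) : Prop :=
  ∀ x y, Q (x + y) = Q x + Q y + x ⬝ᵥ B *ᵥ y

def gaussSum (Q : (κ → ZMod 2) → ZMod 2) : ℤ := ∑ x, sign₂ (Q x)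

namespace HasPolarMatrix

variable {Q : (κ → ZMod 2) → ZMod 2} {B : Matrix κ κ (ZMod 2)}

omit [DecidableEq κ] in
lemma map_zero (hQ : HasPolarMatrix Q B) : Q 0 = 0 := by
  simpa using hQ 0 0

lemma sum_sign₂_add_polar (hQ : HasPolarMatrix Q B) (u : κ → ZMod 2) :
    ∑ x, sign₂ (Q x + x ⬝ᵥ B *ᵥ u) = sign₂ (Q u) * gaussSum Q := by
  rw [gaussSum, Finset.mul_sum]
  refine Fintype.sum_equiv (Equiv.addRight u) _ _ fun x => ?_
  rw [Equiv.coe_addRight, hQ, sign₂_add, sign₂_add, sign₂_add]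
  linear_combination -(sign₂ (Q x) * sign₂ (x ⬝ᵥ B *ᵥ u)) * sign₂_mul_self (Q u)

theorem neg_two_pow_lt_gaussSum_mul (hQ : HasPolarMatrix Q B) (hB : IsUnit B.det)
    {P : Matrix κ ι (ZMod 2)} (hP : Function.Injective P.mulVec)
    {R : (ι → ZMod 2) → ZMod 2} (hR : ∀ y, Q (P *ᵥ y) = R y) :
    -2 ^ Fintype.card κ < gaussSum Q * gaussSum R := by
  set W : Finset (κ → ZMod 2) := {x | x ᵥ* (B * P) = 0} with hW
  have hdouble : gaussSum Q * gaussSum R = 2 ^ Fintype.card ι * ∑ x ∈ W, sign₂ (Q x) :=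
    calc gaussSum Q * gaussSum R = ∑ y, ∑ x, sign₂ (Q x + x ⬝ᵥ B *ᵥ (P *ᵥ y)) := by
          simp_rw [hQ.sum_sign₂_add_polar, hR]
          rw [← Finset.sum_mul, mul_comm]
          rfl
      _ = ∑ x, sign₂ (Q x) * ∑ y, sign₂ ((x ᵥ* (B * P)) ⬝ᵥ y) := by
          rw [Finset.sum_comm]
          simp_rw [mulVec_mulVec, dotProduct_mulVec, sign₂_add, Finset.mul_sum]
      _ = 2 ^ Fintype.card ι * ∑ x ∈ W, sign₂ (Q x) := by
          simp_rw [sum_sign₂_dotProduct, hW, Finset.sum_filter, Finset.mul_sum]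
          exact Finset.sum_congr rfl fun x _ => by split_ifs <;> ring
  have hrank : (B * P).rank = Fintype.card ι := by
    rw [rank_mul_eq_right_of_isUnit_det _ _ hB, Matrix.rank, LinearMap.finrank_range_of_inj hP,
      Module.finrank_fintype_fun_eq_card]
  have hle : Fintype.card ι ≤ Fintype.card κ := hrank ▸ rank_le_card_height _
  have hcard : (2 : ℤ) ^ Fintype.card κ = 2 ^ Fintype.card ι * #W := by
    rw [hW, card_vecMul_eq_zero, hrank, ZMod.card]
    push_cast
    rw [← pow_add, Nat.add_sub_cancel' hle]
  have hsum : -(#W : ℤ) < ∑ x ∈ W, sign₂ (Q x) :=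
    neg_card_lt_sum_sign₂ (by simp [hW]) hQ.map_zero
  rw [hdouble, hcard, ← mul_neg]
  gcongr

end HasPolarMatrix

end QuadraticFormsModTwo

section EvenLattices

variable {ι κ : Type*} [Fintype ι] [Fintype κ] {M : Matrix ι ι ℤ} {N : Matrix κ κ ℤ}

def halfNorm (M : Matrix ι ι ℤ) (v : ι → ℤ) : ℤ := v ⬝ᵥ M *ᵥ v / 2

/-- `v ↦ ⟨v, v⟩ / 2 mod 2` on `L / 2L = 𝔽₂^ι`, evaluated at the lift with coordinates in
`{0, 1}`; for even `M` any lift gives the same value (`IsEvenMatrix.quadMod2_intCast`). -/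
def quadMod2 (M : Matrix ι ι ℤ) (x : ι → ZMod 2) : ZMod 2 :=
  halfNorm M fun i => ((x i).val : ℤ)

omit [Fintype κ] in
lemma intCast_comp_mulVec {R : Type*} [Ring R] (A : Matrix κ ι ℤ) (v : ι → ℤ) :
    (Int.cast ∘ (A *ᵥ v) : κ → R) = A.map Int.cast *ᵥ (Int.cast ∘ v) :=
  funext (RingHom.map_mulVec (Int.castRingHom R) A v)

lemma intCast_dotProduct_mulVec {R : Type*} [Ring R] (v w : ι → ℤ) :
    ((v ⬝ᵥ M *ᵥ w : ℤ) : R) = Int.cast ∘ v ⬝ᵥ M.map Int.cast *ᵥ (Int.cast ∘ w) := by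
  rw [← intCast_comp_mulVec]
  exact RingHom.map_dotProduct (Int.castRingHom R) _ _

omit [Fintype ι] in
lemma intCast_comp_val (x : ι → ZMod 2) : (Int.cast ∘ fun i => ((x i).val : ℤ)) = x := by
  funext i
  simp

lemma isEvenMatrix_of_two_dvd_diag (hS : M.IsSymm) (hd : ∀ i, 2 ∣ M i i) : IsEvenMatrix M := by
  intro v
  refine (ZMod.intCast_zmod_eq_zero_iff_dvd _ 2).mp ?_
  push_cast [dotProduct, mulVec, Finset.mul_sum]
  rw [← Finset.sum_product']
  -- the terms at `(i, j)` and `(j, i)` cancel mod 2, and the diagonal terms vanish mod 2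
  refine Finset.sum_ninvolution Prod.swap (fun p => ?_) (fun p hp => ?_) (by simp) Prod.swap_swap
  · rw [Prod.fst_swap, Prod.snd_swap, hS.apply]
    convert CharTwo.add_self_eq_zero (R := ZMod 2) ((v p.1 : ZMod 2) * (M p.2 p.1 * v p.2))
      using 2
    ring
  · rintro hswap
    obtain ⟨i, j⟩ := p
    obtain rfl : i = j := congrArg Prod.fst hswap.symm
    rw [(ZMod.intCast_zmod_eq_zero_iff_dvd _ 2).mpr (hd i)] at hp
    simp at hp

omit [Fintype ι] [Fintype κ] in
lemma isSymm_dsum (hM : M.IsSymm) (hN : N.IsSymm) : (dsum M N).IsSymm :=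
  hM.fromBlocks transpose_zero hN

lemma sumElim_dotProduct_dsum_mulVec (u₁ v₁ : ι → ℤ) (u₂ v₂ : κ → ℤ) :
    Sum.elim u₁ u₂ ⬝ᵥ dsum M N *ᵥ Sum.elim v₁ v₂ =
      u₁ ⬝ᵥ M *ᵥ v₁ + u₂ ⬝ᵥ N *ᵥ v₂ := by
  simp [dsum, fromBlocks_mulVec, sumElim_dotProduct_sumElim]

namespace IsEvenMatrix

lemma dsum (hM : IsEvenMatrix M) (hN : IsEvenMatrix N) : IsEvenMatrix (dsum M N) := by
  intro v
  rw [← Sum.elim_comp_inl_inr v, sumElim_dotProduct_dsum_mulVec]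
  exact dvd_add (hM _) (hN _)

lemma two_mul_halfNorm (hM : IsEvenMatrix M) (v : ι → ℤ) :
    2 * halfNorm M v = v ⬝ᵥ M *ᵥ v :=
  Int.mul_ediv_cancel' (hM v)

lemma halfNorm_add (hM : IsEvenMatrix M) (hS : M.IsSymm) (v w : ι → ℤ) :
    halfNorm M (v + w) = halfNorm M v + halfNorm M w + v ⬝ᵥ M *ᵥ w := by
  have hsymm : w ⬝ᵥ M *ᵥ v = v ⬝ᵥ M *ᵥ w := by
    rw [dotProduct_mulVec, dotProduct_comm, ← mulVec_transpose, hS.eq]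
  have h := hM.two_mul_halfNorm (v + w)
  rw [mulVec_add, dotProduct_add, add_dotProduct, add_dotProduct, ← hM.two_mul_halfNorm v,
    ← hM.two_mul_halfNorm w, hsymm] at h
  linarith

lemma quadMod2_intCast (hM : IsEvenMatrix M) (hS : M.IsSymm) (v : ι → ℤ) :
    quadMod2 M (Int.cast ∘ v) = halfNorm M v := by
  set w : ι → ℤ := fun i => ((v i : ZMod 2).val : ℤ)
  have hdiff : ∀ i, ∃ c, v i = w i + 2 * c := fun i => by
    obtain ⟨c, hc⟩ := (ZMod.intCast_eq_intCast_iff_dvd_sub (w i) (v i) 2).mp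
      (by simp [w])
    exact ⟨c, by push_cast at hc; linarith⟩
  choose u hu using hdiff
  have hv : v = w + (2 : ℤ) • u := funext fun i => by simp [hu]
  have htwo : halfNorm M ((2 : ℤ) • u) = 2 * (2 * halfNorm M u) := by
    have h := hM.two_mul_halfNorm ((2 : ℤ) • u)
    rw [mulVec_smul, dotProduct_smul, smul_dotProduct, ← hM.two_mul_halfNorm u] at h
    simp only [smul_eq_mul] at h
    linarith
  change ((halfNorm M w : ℤ) : ZMod 2) = halfNorm M v
  rw [hv, hM.halfNorm_add hS, htwo, mulVec_smul, dotProduct_smul, smul_eq_mul]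
  push_cast
  rw [show (2 : ZMod 2) = 0 from rfl]
  ring

lemma hasPolarMatrix_quadMod2 [DecidableEq ι] (hM : IsEvenMatrix M) (hS : M.IsSymm) :
    HasPolarMatrix (quadMod2 M) (M.map Int.cast) := by
  intro x y
  set lx : ι → ℤ := fun i => ((x i).val : ℤ)
  set ly : ι → ℤ := fun i => ((y i).val : ℤ)
  have hxy : x + y = Int.cast ∘ (lx + ly) := by
    funext i
    simp [lx, ly]
  rw [hxy, hM.quadMod2_intCast hS, hM.halfNorm_add hS, Int.cast_add, Int.cast_add,
    intCast_dotProduct_mulVec, intCast_comp_val, intCast_comp_val]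
  rfl

end IsEvenMatrix

lemma halfNorm_dsum (hM : IsEvenMatrix M) (hN : IsEvenMatrix N) (u : ι → ℤ) (v : κ → ℤ) :
    halfNorm (dsum M N) (Sum.elim u v) = halfNorm M u + halfNorm N v := by
  have h := (hM.dsum hN).two_mul_halfNorm (Sum.elim u v)
  rw [sumElim_dotProduct_dsum_mulVec, ← hM.two_mul_halfNorm, ← hN.two_mul_halfNorm] at h
  linarith

lemma quadMod2_dsum (hM : IsEvenMatrix M) (hN : IsEvenMatrix N) (x : ι ⊕ κ → ZMod 2) :
    quadMod2 (dsum M N) x = quadMod2 M (x ∘ Sum.inl) + quadMod2 N (x ∘ Sum.inr) := by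
  rw [quadMod2, ← Sum.elim_comp_inl_inr fun i => ((x i).val : ℤ), halfNorm_dsum hM hN,
    Int.cast_add]
  rfl

lemma gaussSum_quadMod2_dsum [DecidableEq ι] [DecidableEq κ] (hM : IsEvenMatrix M)
    (hN : IsEvenMatrix N) :
    gaussSum (quadMod2 (dsum M N)) = gaussSum (quadMod2 M) * gaussSum (quadMod2 N) := by
  rw [gaussSum, gaussSum, gaussSum, Finset.sum_mul_sum, ← Fintype.sum_prod_type']
  exact Fintype.sum_equiv (Equiv.sumArrowEquivProdArrow ι κ (ZMod 2)) _ _ fun x => by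
    rw [quadMod2_dsum hM hN, sign₂_add]
    rfl

lemma isUnit_det_map_dsum [DecidableEq ι] [DecidableEq κ] {R : Type*} [CommRing R]
    (hM : IsUnit (M.map (Int.cast : ℤ → R)).det) (hN : IsUnit (N.map (Int.cast : ℤ → R)).det) :
    IsUnit ((dsum M N).map (Int.cast : ℤ → R)).det := by
  rw [dsum, fromBlocks_map, Matrix.map_zero _ Int.cast_zero, Matrix.map_zero _ Int.cast_zero,
    det_fromBlocks_zero₂₁]
  exact hM.mul hN

end EvenLattices

section PrimitiveEmbeddings

variable {ι κ : Type*} [Fintype ι] [DecidableEq ι] [Fintype κ] {M : Matrix ι ι ℤ}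
  {N : Matrix κ κ ℤ} {f : (ι → ℤ) →ₗ[ℤ] (κ → ℤ)}

namespace IsPrimitiveEmbedding

lemma injective_mulVec_mod2 (hf : IsPrimitiveEmbedding M N f) :
    Function.Injective ((LinearMap.toMatrix' f).map (Int.cast : ℤ → ZMod 2)).mulVec := by
  obtain ⟨hinj, -, hprim⟩ := hf
  refine (injective_iff_map_eq_zero (mulVecLin _)).mpr fun x hx => ?_
  set w : ι → ℤ := fun i => ((x i).val : ℤ)
  have heven : ∀ k, ∃ c, f w k = 2 * c := fun k => by
    have hk := congrFun (intCast_comp_mulVec (R := ZMod 2) (LinearMap.toMatrix' f) w) k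
    rw [intCast_comp_val, LinearMap.toMatrix'_mulVec] at hk
    exact (ZMod.intCast_zmod_eq_zero_iff_dvd _ 2).mp (hk.trans (congrFun hx k))
  choose u hu using heven
  -- `f w ∈ 2 L`, so primitivity and injectivity give `w ∈ 2 T`
  obtain ⟨y, hy⟩ := hprim u 2 two_ne_zero ⟨w, funext fun k => by simp [hu]⟩
  have hw : w = (2 : ℤ) • y := hinj (by rw [map_smul, hy]; exact funext fun k => by simp [hu])
  rw [← intCast_comp_val x]
  change Int.cast ∘ w = 0
  funext i
  simp [hw, show (2 : ZMod 2) = 0 from rfl]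

lemma quadMod2_mulVec (hf : IsPrimitiveEmbedding M N f) (hM : IsEvenMatrix M) (hMs : M.IsSymm)
    (hN : IsEvenMatrix N) (hNs : N.IsSymm) (y : ι → ZMod 2) :
    quadMod2 N ((LinearMap.toMatrix' f).map Int.cast *ᵥ y) = quadMod2 M y := by
  rw [← intCast_comp_val y, ← intCast_comp_mulVec, hN.quadMod2_intCast hNs,
    hM.quadMod2_intCast hMs, LinearMap.toMatrix'_mulVec, halfNorm, halfNorm, hf.2.1]

theorem neg_two_pow_lt_gaussSum_mul [DecidableEq κ] (hf : IsPrimitiveEmbedding M N f)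
    (hM : IsEvenMatrix M) (hMs : M.IsSymm) (hN : IsEvenMatrix N) (hNs : N.IsSymm)
    (hN2 : IsUnit (N.map (Int.cast : ℤ → ZMod 2)).det) :
    -2 ^ Fintype.card κ < gaussSum (quadMod2 N) * gaussSum (quadMod2 M) :=
  (hN.hasPolarMatrix_quadMod2 hNs).neg_two_pow_lt_gaussSum_mul hN2 hf.injective_mulVec_mod2
    (hf.quadMod2_mulVec hM hMs hN hNs)

end IsPrimitiveEmbedding

end PrimitiveEmbeddings

lemma isSymm_E8 : E8.IsSymm := by decide

lemma isSymm_D4 : D4.IsSymm := by decide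

lemma isSymm_U : U.IsSymm := by decide

lemma isEvenMatrix_E8 : IsEvenMatrix E8 := isEvenMatrix_of_two_dvd_diag isSymm_E8 (by decide)

lemma isEvenMatrix_D4 : IsEvenMatrix D4 := isEvenMatrix_of_two_dvd_diag isSymm_D4 (by decide)

lemma isEvenMatrix_U : IsEvenMatrix U := isEvenMatrix_of_two_dvd_diag isSymm_U (by decide)

set_option maxRecDepth 100000 in
lemma gaussSum_E8 : gaussSum (quadMod2 E8) = 16 := by decide

set_option maxRecDepth 100000 in
lemma gaussSum_D4 : gaussSum (quadMod2 D4) = -8 := by decide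

lemma gaussSum_U : gaussSum (quadMod2 U) = 2 := by decide

lemma isUnit_det_E8_mod2 : IsUnit (E8.map (Int.cast : ℤ → ZMod 2)).det :=
  -- the inverse of `E₈` (which is unimodular), reduced modulo 2
  isUnit_det_of_left_inverse (B := !![0,1,1,0,0,0,0,0; 1,0,0,1,0,1,0,1; 1,0,0,0,0,0,0,0;
    0,1,0,0,0,0,0,0; 0,0,0,0,0,1,0,1; 0,1,0,0,1,0,0,0; 0,0,0,0,0,0,0,1; 0,1,0,0,1,0,1,0])
    (by decide)

lemma isUnit_det_U_mod2 : IsUnit (U.map (Int.cast : ℤ → ZMod 2)).det :=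
  isUnit_det_of_left_inverse (B := U.map Int.cast) (by decide)

lemma isSymm_K3 : K3.IsSymm :=
  isSymm_dsum (isSymm_dsum isSymm_E8 isSymm_E8)
    (isSymm_dsum isSymm_U (isSymm_dsum isSymm_U isSymm_U))

lemma isSymm_T0 : T0.IsSymm :=
  isSymm_dsum (isSymm_dsum isSymm_D4 (isSymm_dsum isSymm_D4 isSymm_D4))
    (isSymm_dsum isSymm_U isSymm_U)

lemma isEvenMatrix_K3 : IsEvenMatrix K3 :=
  have hE8 := isEvenMatrix_E8
  have hU := isEvenMatrix_U
  (hE8.dsum hE8).dsum (hU.dsum (hU.dsum hU))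

lemma isEvenMatrix_T0 : IsEvenMatrix T0 :=
  have hD4 := isEvenMatrix_D4
  have hU := isEvenMatrix_U
  (hD4.dsum (hD4.dsum hD4)).dsum (hU.dsum hU)

lemma isUnit_det_K3_mod2 : IsUnit (K3.map (Int.cast : ℤ → ZMod 2)).det :=
  have hE8 := isUnit_det_E8_mod2
  have hU := isUnit_det_U_mod2
  isUnit_det_map_dsum (isUnit_det_map_dsum hE8 hE8)
    (isUnit_det_map_dsum hU (isUnit_det_map_dsum hU hU))

lemma gaussSum_K3 : gaussSum (quadMod2 K3) = 2 ^ 11 := by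
  have hE8 := isEvenMatrix_E8
  have hU := isEvenMatrix_U
  rw [K3, gaussSum_quadMod2_dsum (hE8.dsum hE8) (hU.dsum (hU.dsum hU)),
    gaussSum_quadMod2_dsum hE8 hE8, gaussSum_quadMod2_dsum hU (hU.dsum hU),
    gaussSum_quadMod2_dsum hU hU, gaussSum_E8, gaussSum_U]
  norm_num

lemma gaussSum_T0 : gaussSum (quadMod2 T0) = -2 ^ 11 := by
  have hD4 := isEvenMatrix_D4
  have hU := isEvenMatrix_U
  rw [T0, gaussSum_quadMod2_dsum (hD4.dsum (hD4.dsum hD4)) (hU.dsum hU),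
    gaussSum_quadMod2_dsum hD4 (hD4.dsum hD4), gaussSum_quadMod2_dsum hD4 hD4,
    gaussSum_quadMod2_dsum hU hU, gaussSum_D4, gaussSum_U]
  norm_num

/-- The lattice `(D4)³ ⊕ U²` admits no primitive isometric embedding into
the K3 lattice `(E8)² ⊕ U³`. -/
theorem no_primitive_embedding_T0_K3 :
    ¬ ∃ f : (T0Ix → ℤ) →ₗ[ℤ] (K3Ix → ℤ), IsPrimitiveEmbedding T0 K3 f := by
  rintro ⟨f, hf⟩
  have h := hf.neg_two_pow_lt_gaussSum_mul isEvenMatrix_T0 isSymm_T0 isEvenMatrix_K3 isSymm_K3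
    isUnit_det_K3_mod2
  rw [gaussSum_K3, gaussSum_T0] at h
  norm_num at h

end MaxAlg
end

section
/- The lattices (D4)³ ⊕ U² and D4 ⊕ E8 ⊕ U(2) ⊕ U(2) are isometric. -/
open Matrix

/-!
Cancelling the common summand `D4`, it suffices to show `D4² ⊕ U² ≅ E8 ⊕ U(2)²`. Both sides are
even of signature `(10, 2)`, and their discriminant forms on `(ℤ/2)⁴`, `v ⊕ v` and `u ⊕ u`, are
isomorphic, so Nikulin's uniqueness theorem predicts an isometry. We exhibit one as an integral
change of basis `P` with integral inverse and `Pᵀ (E8 ⊕ U(2)²) P = D4² ⊕ U²`.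
-/

namespace MaxAlg

section
variable {ι ι' κ κ' μ : Type*} [Fintype ι] [Fintype ι'] [Fintype κ] [Fintype κ'] [Fintype μ]

theorem dotProduct_dsum_mulVec (M : Matrix ι ι ℤ) (N : Matrix κ κ ℤ) (v w : ι ⊕ κ → ℤ) :
    v ⬝ᵥ dsum M N *ᵥ w =
      (v ∘ Sum.inl) ⬝ᵥ M *ᵥ (w ∘ Sum.inl) + (v ∘ Sum.inr) ⬝ᵥ N *ᵥ (w ∘ Sum.inr) := by
  rw [dsum, fromBlocks_mulVec, ← Sum.elim_comp_inl_inr v, sumElim_dotProduct_sumElim]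
  simp only [zero_mulVec, add_zero, zero_add, Sum.elim_comp_inl, Sum.elim_comp_inr]

theorem LatticeIsometric.refl (M : Matrix ι ι ℤ) : LatticeIsometric M M :=
  ⟨LinearEquiv.refl ℤ _, fun _ _ => rfl⟩

theorem LatticeIsometric.trans {M : Matrix ι ι ℤ} {N : Matrix κ κ ℤ} {L : Matrix μ μ ℤ}
    (h₁ : LatticeIsometric M N) (h₂ : LatticeIsometric N L) : LatticeIsometric M L := by
  obtain ⟨e₁, he₁⟩ := h₁
  obtain ⟨e₂, he₂⟩ := h₂
  exact ⟨e₁.trans e₂, fun v w => (he₂ _ _).trans (he₁ v w)⟩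

theorem LatticeIsometric.dsum_congr {M : Matrix ι ι ℤ} {M' : Matrix ι' ι' ℤ}
    {N : Matrix κ κ ℤ} {N' : Matrix κ' κ' ℤ} (hM : LatticeIsometric M M')
    (hN : LatticeIsometric N N') :
    LatticeIsometric (dsum M N) (dsum M' N') := by
  obtain ⟨e₁, he₁⟩ := hM
  obtain ⟨e₂, he₂⟩ := hN
  refine ⟨(LinearEquiv.sumArrowLequivProdArrow ι κ ℤ ℤ).trans ((e₁.prodCongr e₂).trans
    (LinearEquiv.sumArrowLequivProdArrow ι' κ' ℤ ℤ).symm), fun v w => ?_⟩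
  simp only [dotProduct_dsum_mulVec]
  exact congrArg₂ (· + ·) (he₁ _ _) (he₂ _ _)

theorem LatticeIsometric.submatrix_self (N : Matrix κ κ ℤ) (e : ι ≃ κ) :
    LatticeIsometric (N.submatrix e e) N :=
  ⟨LinearEquiv.funCongrLeft ℤ ℤ e.symm, fun v w => by
    change (v ∘ e.symm) ⬝ᵥ N *ᵥ (w ∘ e.symm) = v ⬝ᵥ N.submatrix e e *ᵥ w
    rw [submatrix_mulVec_equiv, comp_equiv_symm_dotProduct]⟩

theorem LatticeIsometric.dsum_assoc (A : Matrix ι ι ℤ) (B : Matrix κ κ ℤ) (C : Matrix μ μ ℤ) :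
    LatticeIsometric (dsum (dsum A B) C) (dsum A (dsum B C)) := by
  convert LatticeIsometric.submatrix_self (dsum A (dsum B C)) (Equiv.sumAssoc ι κ μ) using 1
  ext ((i | j) | k) ((i' | j') | k') <;> rfl

theorem LatticeIsometric.of_transpose_mul_mul [DecidableEq ι] [DecidableEq κ]
    {M : Matrix ι ι ℤ} {N : Matrix κ κ ℤ} (P : Matrix κ ι ℤ) (Q : Matrix ι κ ℤ)
    (hPQ : P * Q = 1) (hQP : Q * P = 1) (hP : Pᵀ * N * P = M) : LatticeIsometric M N := by
  refine ⟨.ofLinearMap P.mulVecLin Q.mulVecLin ?_ ?_, fun v w => ?_⟩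
  · rw [← Matrix.mulVecLin_mul, hPQ, Matrix.mulVecLin_one]
  · rw [← Matrix.mulVecLin_mul, hQP, Matrix.mulVecLin_one]
  · change P *ᵥ v ⬝ᵥ N *ᵥ (P *ᵥ w) = v ⬝ᵥ M *ᵥ w
    rw [← hP, ← Matrix.vecMul_transpose, Matrix.dotProduct_mulVec, Matrix.vecMul_vecMul,
      Matrix.dotProduct_mulVec, Matrix.vecMul_vecMul]
    exact (Matrix.dotProduct_mulVec _ _ _).symm
end

/- The columns are the coordinates in `E8 ⊕ U(2) ⊕ U(2)` of the standard basis of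
`D4 ⊕ D4 ⊕ U ⊕ U`; the matrix was found by a computer search. -/
def d4D4UUToE8U2U2 : Matrix (Fin 8 ⊕ (Fin 2 ⊕ Fin 2)) ((Fin 4 ⊕ Fin 4) ⊕ (Fin 2 ⊕ Fin 2)) ℤ :=
  (!![-2, 1, -2, 0, 2, 3, -4, 0, -1, 9, 1, -1;
      -1, 0, -3, 1, 2, 3, -4, 0, -1, 9, 1, -1;
      -2, 1, -4, 0, 1, 2, -3, 1, -1, 7, 0, 0;
      -2, 1, -6, 0, 1, 2, -3, 1, -1, 9, 0, 1;
      -3, 3, -7, -1, 3, 5, -5, 1, -2, 20, 0, 0;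
      -2, 1, -4, 0, 2, 2, -2, 0, -1, 9, 0, 0;
      -2, 2, -4, 0, 2, 2, -2, 0, -1, 9, 0, 0;
      -1, 2, -3, -1, 2, 2, -2, 0, -1, 8, 0, 0;
      -1, 1, -1, 0, 2, 3, -3, 0, -1, 9, 1, -1;
      0, 1, -1, -1, -1, -1, 2, 1, 0, -1, -1, 2;
      -1, 2, -2, -1, 1, 3, -2, 0, -1, 9, 0, 0;
      1, -2, 2, 1, -2, -2, 2, -1, 1, -10, 0, 0] : Matrix (Fin 12) (Fin 12) ℤ).submatrix
    (finSumFinEquiv ∘ Sum.map id finSumFinEquiv)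
    (finSumFinEquiv ∘ Sum.map finSumFinEquiv finSumFinEquiv)

def e8U2U2ToD4D4UU : Matrix ((Fin 4 ⊕ Fin 4) ⊕ (Fin 2 ⊕ Fin 2)) (Fin 8 ⊕ (Fin 2 ⊕ Fin 2)) ℤ :=
  (!![-1, 0, 0, 1, -1, 0, 0, 0, 0, -1, 1, -1;
      0, 0, 0, 0, 0, -1, 1, 0, 0, 0, 0, 0;
      0, 0, 0, 1, -2, 1, 0, -1, -1, -1, 2, -2;
      0, 1, 0, 0, -1, 0, 1, -1, -1, 0, 1, -1;
      4, 4, -1, -7, 7, -3, 0, 3, -1, 7, -7, 6;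
      5, 5, -1, -10, 11, -5, 0, 4, 0, 10, -10, 10;
      0, 0, 0, -2, 3, -1, 0, 1, 2, 2, -3, 3;
      2, 2, 0, -5, 6, -3, 0, 2, 1, 5, -6, 5;
      11, 9, -4, -18, 22, -11, 1, 7, -2, 18, -20, 18;
      -1, -1, 0, 2, -2, 1, 0, -1, 0, -2, 2, -2;
      -2, -3, 0, 3, -1, 0, 0, 0, 4, -2, 0, 0;
      2, 2, -1, -1, 0, 0, 0, 0, -2, 2, 0, 0] : Matrix (Fin 12) (Fin 12) ℤ).submatrix
    (finSumFinEquiv ∘ Sum.map finSumFinEquiv finSumFinEquiv)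
    (finSumFinEquiv ∘ Sum.map id finSumFinEquiv)

theorem latticeIsometric_D4_D4_U_U_E8_U2_U2 :
    LatticeIsometric (dsum (dsum D4 D4) (dsum U U))
      (dsum E8 (dsum ((2 : ℤ) • U) ((2 : ℤ) • U))) :=
  .of_transpose_mul_mul d4D4UUToE8U2U2 e8U2U2ToD4D4UU (by decide) (by decide) (by decide)

/-- `(D4)³ ⊕ U²` and `D4 ⊕ E8 ⊕ U(2) ⊕ U(2)` are isometric. -/
theorem T0_isometric_D4_E8_U2_U2 :
    LatticeIsometric T0 (dsum D4 (dsum E8 (dsum ((2 : ℤ) • U) ((2 : ℤ) • U)))) :=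
  (LatticeIsometric.dsum_assoc D4 (dsum D4 D4) (dsum U U)).trans
    ((LatticeIsometric.refl D4).dsum_congr latticeIsometric_D4_D4_U_U_E8_U2_U2)

end MaxAlg
end

section
/- The lattice (D4)³ ⊕ U² is isometric to an index-2 sublattice of the even lattice D4 ⊕ E8 ⊕ U(2) ⊕ U, and D4 ⊕ E8 ⊕ U(2) ⊕ U admits a primitive isometric embedding into the K3 lattice (E8)² ⊕ U³ whose orthogonal complement is isometric to D4 ⊕ U(2). -/
open Matrix

namespace MaxAlg

abbrev M19Ix : Type := Fin 4 ⊕ (Fin 8 ⊕ (Fin 2 ⊕ Fin 2))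

/-- The lattice `D4 ⊕ E8 ⊕ U(2) ⊕ U`. -/
def M19 : Matrix M19Ix M19Ix ℤ := dsum D4 (dsum E8 (dsum ((2 : ℤ) • U) U))


/-!
All the maps are explicit integer matrices, and their Gram identities are checked by
computation. If `A` embeds a lattice `T` isometrically into a lattice `L` of the same rank,
then `[L : A T]² · det L = det T`, because the index is `|det A|` (Smith normal form); with
`det T0 = 4³ = 64` and `det M19 = 4 · 1 · (-4) · (-1) = 16` the index is 2.

The embedding of `M19` into the K3 lattice is the sum of `D4 ⊂ E8`, `E8 = E8`,
`U(2) ⊂ U ⊕ U` along the diagonal and `U = U`; it has an integral left inverse, so it is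
primitive. Its orthogonal complement contains `D4 ⊕ U(2)`, embedded as the complement of `D4`
in `E8` and as the antidiagonal of `U ⊕ U`, again with an integral left inverse. The two agree
because the discriminant groups of both summands are 2-elementary: twice the sum of the
orthogonal projections onto them is an integral matrix, equal to `2`.
-/

section GramMatrix

variable {R ι κ μ : Type*} [Fintype ι] [Fintype κ] [Fintype μ]

theorem mulVec_dotProduct_mulVec_mulVec [CommSemiring R] (X : Matrix μ ι R) (N : Matrix μ μ R)
    (Y : Matrix μ κ R) (v : ι → R) (w : κ → R) :
    X *ᵥ v ⬝ᵥ N *ᵥ (Y *ᵥ w) = v ⬝ᵥ (Xᵀ * N * Y) *ᵥ w := by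
  rw [← mulVec_mulVec, ← mulVec_mulVec, dotProduct_mulVec v Xᵀ, vecMul_transpose]

theorem mulVec_dotProduct_mulVec_of_gram [CommSemiring R] {X : Matrix μ ι R} {N : Matrix μ μ R}
    {M : Matrix ι ι R} (hX : Xᵀ * N * X = M) (v w : ι → R) :
    X *ᵥ v ⬝ᵥ N *ᵥ (X *ᵥ w) = v ⬝ᵥ M *ᵥ w := by
  rw [mulVec_dotProduct_mulVec_mulVec, hX]

theorem mulVec_injective_of_mul_eq_one [CommSemiring R] [DecidableEq ι] {B : Matrix μ ι R}
    {L : Matrix ι μ R} (hLB : L * B = 1) : Function.Injective B.mulVec := fun v w h => by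
  simpa only [mulVec_mulVec, hLB, one_mulVec] using congrArg (L *ᵥ ·) h

theorem mulVec_injective_of_det_ne_zero [CommRing R] [IsDomain R] [DecidableEq ι]
    {M : Matrix ι ι R} (hM : M.det ≠ 0) : Function.Injective M.mulVec := by
  intro v w hvw
  by_contra hne
  exact hM (exists_mulVec_eq_zero_iff.mp ⟨v - w, sub_ne_zero.mpr hne, by
    rw [mulVec_sub, hvw, sub_self]⟩)

theorem mulVec_injective_of_gram_det_ne_zero [CommRing R] [IsDomain R] [DecidableEq ι]
    {A : Matrix μ ι R} {N : Matrix μ μ R} {M : Matrix ι ι R} (hA : Aᵀ * N * A = M)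
    (hM : M.det ≠ 0) : Function.Injective A.mulVec := fun v w hvw =>
  mulVec_injective_of_det_ne_zero hM (by simp only [← hA, ← mulVec_mulVec, hvw])

end GramMatrix

section IntegralLattice

variable {ι κ μ : Type*} [Fintype ι] [Fintype κ] [Fintype μ]

theorem natCard_quotient_range_mulVecLin [DecidableEq ι] (A : Matrix ι ι ℤ) (hA : A.det ≠ 0) :
    Nat.card ((ι → ℤ) ⧸ LinearMap.range A.mulVecLin) = A.det.natAbs := by
  rw [← Submodule.natAbs_det_equiv _
    (LinearEquiv.ofInjective _ (mulVec_injective_of_det_ne_zero hA)), ← LinearMap.det_toLin']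
  rfl

theorem natCard_quotient_range_sq_mul_det [DecidableEq ι] [DecidableEq κ] {A : Matrix ι κ ℤ}
    {N : Matrix ι ι ℤ} {M : Matrix κ κ ℤ} (hcard : Fintype.card κ = Fintype.card ι)
    (hA : Aᵀ * N * A = M) (hM : M.det ≠ 0) :
    (Nat.card ((ι → ℤ) ⧸ LinearMap.range A.mulVecLin) : ℤ) ^ 2 * N.det = M.det := by
  let e : ι ≃ κ := (Fintype.equivOfCardEq hcard).symm
  let A' : Matrix ι ι ℤ := A.submatrix id e
  have hrange : LinearMap.range A'.mulVecLin = LinearMap.range A.mulVecLin := by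
    have : A'.mulVecLin = A.mulVecLin ∘ₗ (LinearEquiv.funCongrLeft ℤ ℤ e.symm).toLinearMap :=
      LinearMap.ext fun v => submatrix_mulVec_equiv A v id e
    rw [this, LinearMap.range_comp_of_range_eq_top _ (LinearEquiv.range _)]
  have hdet : A'.det ^ 2 * N.det = M.det := by
    have hgram : A'ᵀ * N * A' = M.submatrix e e := by
      rw [← hA, transpose_submatrix, ← submatrix_id_id N, ← submatrix_mul _ _ _ _ _
        Function.bijective_id, ← submatrix_mul _ _ _ _ _ Function.bijective_id, submatrix_id_id]
    have := congrArg det hgram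
    rw [det_submatrix_equiv_self, det_mul, det_mul, det_transpose] at this
    rw [← this]
    ring
  have hA' : A'.det ≠ 0 := fun h => hM (by rw [← hdet, h]; ring)
  rw [← hrange, natCard_quotient_range_mulVecLin A' hA', Int.natCast_natAbs, sq_abs, hdet]

theorem isPrimitiveSubmodule_range_mulVecLin_of_mul_eq_one [DecidableEq μ]
    {C : Matrix κ μ ℤ} {L : Matrix μ κ ℤ} (hLC : L * C = 1) :
    IsPrimitiveSubmodule (LinearMap.range C.mulVecLin) := by
  rintro v k hk ⟨z, hz⟩
  refine ⟨L *ᵥ v, ?_⟩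
  have hz' : z = k • (L *ᵥ v) := by
    have := congrArg (L *ᵥ ·) hz
    simp only [mulVecLin_apply, mulVec_mulVec, hLC, one_mulVec, mulVec_smul] at this
    exact this
  apply smul_right_injective _ hk
  simp only [mulVecLin_apply, ← mulVec_smul, ← hz', ← hz]

theorem isPrimitiveEmbedding_mulVecLin [DecidableEq ι] {B : Matrix κ ι ℤ} {N : Matrix κ κ ℤ}
    {M : Matrix ι ι ℤ} {L : Matrix ι κ ℤ} (hB : Bᵀ * N * B = M) (hLB : L * B = 1) :
    IsPrimitiveEmbedding M N B.mulVecLin :=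
  ⟨mulVec_injective_of_mul_eq_one hLB, mulVec_dotProduct_mulVec_of_gram hB,
    isPrimitiveSubmodule_range_mulVecLin_of_mul_eq_one hLB⟩

theorem mem_orthComp_range_mulVecLin_iff {N : Matrix κ κ ℤ} {B : Matrix κ ι ℤ} {v : κ → ℤ} :
    v ∈ orthComp N (LinearMap.range B.mulVecLin) ↔ (N * B)ᵀ *ᵥ v = 0 := by
  rw [← dotProduct_eq_zero_iff]
  refine ⟨fun hv u => ?_, fun hv t ⟨u, hu⟩ => ?_⟩
  · rw [mulVec_transpose, ← dotProduct_mulVec, ← mulVec_mulVec]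
    exact hv _ ⟨u, rfl⟩
  · rw [← hu, mulVecLin_apply, mulVec_mulVec, dotProduct_mulVec, ← mulVec_transpose]
    exact hv u

theorem orthComp_range_mulVecLin_eq [DecidableEq κ] [DecidableEq μ] {N : Matrix κ κ ℤ}
    {B : Matrix κ ι ℤ} {C : Matrix κ μ ℤ} {L P : Matrix μ κ ℤ} {Q : Matrix κ ι ℤ} {d : ℤ}
    (hCB : Cᵀ * N * B = 0) (hLC : L * C = 1) (hd : d ≠ 0) (hspan : d • 1 = C * P + Q * (N * B)ᵀ) :
    orthComp N (LinearMap.range B.mulVecLin) = LinearMap.range C.mulVecLin := by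
  ext v
  rw [mem_orthComp_range_mulVecLin_iff]
  constructor
  · intro hv
    refine isPrimitiveSubmodule_range_mulVecLin_of_mul_eq_one hLC v d hd ⟨P *ᵥ v, ?_⟩
    have := congrArg (· *ᵥ v) hspan
    simp only [smul_mulVec, one_mulVec, add_mulVec, ← mulVec_mulVec, hv, mulVec_zero,
      add_zero] at this
    exact this.symm
  · rintro ⟨u, rfl⟩
    rw [mulVecLin_apply, mulVec_mulVec, ← transpose_transpose C, ← transpose_mul,
      ← Matrix.mul_assoc, hCB, transpose_zero, zero_mulVec]

end IntegralLattice

theorem det_dsum {ι κ : Type*} [Fintype ι] [Fintype κ] [DecidableEq ι] [DecidableEq κ]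
    (M : Matrix ι ι ℤ) (N : Matrix κ κ ℤ) : (dsum M N).det = M.det * N.det :=
  det_fromBlocks_zero₂₁ M 0 N

theorem det_D4 : D4.det = 4 := by decide

theorem det_U : U.det = -1 := by decide

theorem det_T0 : T0.det = 64 := by
  simp only [T0, det_dsum, det_D4, det_U]
  norm_num

theorem det_M19 : M19.det = 16 := by
  simp only [M19, det_dsum, det_D4, E8, CartanMatrix.E₈_det, det_smul, det_U,
    Fintype.card_fin]
  norm_num

def flatT0 : T0Ix → Fin 16
  | .inl (.inl i) => ⟨i, by omega⟩
  | .inl (.inr (.inl i)) => ⟨4 + i, by omega⟩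
  | .inl (.inr (.inr i)) => ⟨8 + i, by omega⟩
  | .inr (.inl i) => ⟨12 + i, by omega⟩
  | .inr (.inr i) => ⟨14 + i, by omega⟩

def flatM19 : M19Ix → Fin 16
  | .inl i => ⟨i, by omega⟩
  | .inr (.inl i) => ⟨4 + i, by omega⟩
  | .inr (.inr (.inl i)) => ⟨12 + i, by omega⟩
  | .inr (.inr (.inr i)) => ⟨14 + i, by omega⟩

def flatK3 : K3Ix → Fin 22
  | .inl (.inl i) => ⟨i, by omega⟩
  | .inl (.inr i) => ⟨8 + i, by omega⟩
  | .inr (.inl i) => ⟨16 + i, by omega⟩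
  | .inr (.inr (.inl i)) => ⟨18 + i, by omega⟩
  | .inr (.inr (.inr i)) => ⟨20 + i, by omega⟩

def flatCompl : Fin 4 ⊕ Fin 2 → Fin 6
  | .inl i => ⟨i, by omega⟩
  | .inr i => ⟨4 + i, by omega⟩

def t0ToM19 : Matrix M19Ix T0Ix ℤ :=
  submatrix
    !![ 1,  0,  0,  0,  0,  0,  0,  0,  0,  0,  0,  0,  0,  0,  0,  0;
        0,  1,  0,  0,  0,  0,  0,  0,  0,  0,  0,  0,  0,  0,  0,  0;
        0,  0,  1,  0,  0,  0,  0,  0,  0,  0,  0,  0,  0,  0,  0,  0;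
        0,  0,  0,  1,  0,  0,  0,  0,  0,  0,  0,  0,  0,  0,  0,  0;
        0,  0,  0,  0,  2,  0,  0, -2,  0,  2, -2, -4, -3,  2,  0,  0;
        0,  0,  0,  0,  0,  0,  0,  0,  0,  3, -2, -4, -1,  1,  0,  0;
        0,  0,  0,  0,  0,  0,  0,  0,  0,  4, -4, -4, -1,  1,  0,  0;
        0,  0,  0,  0, -1,  0,  0,  2,  0,  6, -5, -5,  0,  0,  0,  0;
        0,  0,  0,  0,  0, -1,  0,  2,  0,  5, -4, -4,  0,  0,  0,  0;
        0,  0,  0,  0,  0,  0, -1,  1,  0,  4, -3, -3,  0,  0,  0,  0;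
        0,  0,  0,  0,  0,  0,  0,  0,  0,  3, -2, -2,  0,  0,  0,  0;
        0,  0,  0,  0,  0,  0,  0,  0, -1,  2, -1, -1,  0,  0,  0,  0;
        0,  0,  0,  0, -2,  0,  0,  3,  0,  0,  0,  3,  4, -2,  0,  0;
        0,  0,  0,  0,  1,  0,  0, -1,  0,  0,  0, -1, -1,  1,  0,  0;
        0,  0,  0,  0,  0,  0,  0,  0,  0,  0,  0,  0,  0,  0,  0,  1;
        0,  0,  0,  0,  0,  0,  0,  0,  0,  0,  0,  0,  0,  0,  1,  0]
    flatM19 flatT0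

def m19ToK3 : Matrix K3Ix M19Ix ℤ :=
  submatrix
    !![ 0,  0,  0,  0,  0,  0,  0,  0,  0,  0,  0,  0,  0,  0,  0,  0;
        0,  0,  0,  1,  0,  0,  0,  0,  0,  0,  0,  0,  0,  0,  0,  0;
       -1,  0,  0,  1,  0,  0,  0,  0,  0,  0,  0,  0,  0,  0,  0,  0;
        0, -1,  0,  2,  0,  0,  0,  0,  0,  0,  0,  0,  0,  0,  0,  0;
        0,  0, -1,  1,  0,  0,  0,  0,  0,  0,  0,  0,  0,  0,  0,  0;
        0,  0,  0,  0,  0,  0,  0,  0,  0,  0,  0,  0,  0,  0,  0,  0;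
        0,  0,  0,  0,  0,  0,  0,  0,  0,  0,  0,  0,  0,  0,  0,  0;
        0,  0,  0,  0,  0,  0,  0,  0,  0,  0,  0,  0,  0,  0,  0,  0;
        0,  0,  0,  0,  1,  0,  0,  0,  0,  0,  0,  0,  0,  0,  0,  0;
        0,  0,  0,  0,  0,  1,  0,  0,  0,  0,  0,  0,  0,  0,  0,  0;
        0,  0,  0,  0,  0,  0,  1,  0,  0,  0,  0,  0,  0,  0,  0,  0;
        0,  0,  0,  0,  0,  0,  0,  1,  0,  0,  0,  0,  0,  0,  0,  0;
        0,  0,  0,  0,  0,  0,  0,  0,  1,  0,  0,  0,  0,  0,  0,  0;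
        0,  0,  0,  0,  0,  0,  0,  0,  0,  1,  0,  0,  0,  0,  0,  0;
        0,  0,  0,  0,  0,  0,  0,  0,  0,  0,  1,  0,  0,  0,  0,  0;
        0,  0,  0,  0,  0,  0,  0,  0,  0,  0,  0,  1,  0,  0,  0,  0;
        0,  0,  0,  0,  0,  0,  0,  0,  0,  0,  0,  0,  0,  0,  1,  0;
        0,  0,  0,  0,  0,  0,  0,  0,  0,  0,  0,  0,  0,  0,  0,  1;
        0,  0,  0,  0,  0,  0,  0,  0,  0,  0,  0,  0,  1,  0,  0,  0;
        0,  0,  0,  0,  0,  0,  0,  0,  0,  0,  0,  0,  0,  1,  0,  0;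
        0,  0,  0,  0,  0,  0,  0,  0,  0,  0,  0,  0,  1,  0,  0,  0;
        0,  0,  0,  0,  0,  0,  0,  0,  0,  0,  0,  0,  0,  1,  0,  0]
    flatK3 flatM19

def k3ToM19 : Matrix M19Ix K3Ix ℤ :=
  submatrix
    !![ 0,  1, -1,  0,  0,  0,  0,  0,  0,  0,  0,  0,  0,  0,  0,  0,  0,  0,  0,  0,  0,  0;
        0,  2,  0, -1,  0,  0,  0,  0,  0,  0,  0,  0,  0,  0,  0,  0,  0,  0,  0,  0,  0,  0;
        0,  1,  0,  0, -1,  0,  0,  0,  0,  0,  0,  0,  0,  0,  0,  0,  0,  0,  0,  0,  0,  0;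
        0,  1,  0,  0,  0,  0,  0,  0,  0,  0,  0,  0,  0,  0,  0,  0,  0,  0,  0,  0,  0,  0;
        0,  0,  0,  0,  0,  0,  0,  0,  1,  0,  0,  0,  0,  0,  0,  0,  0,  0,  0,  0,  0,  0;
        0,  0,  0,  0,  0,  0,  0,  0,  0,  1,  0,  0,  0,  0,  0,  0,  0,  0,  0,  0,  0,  0;
        0,  0,  0,  0,  0,  0,  0,  0,  0,  0,  1,  0,  0,  0,  0,  0,  0,  0,  0,  0,  0,  0;
        0,  0,  0,  0,  0,  0,  0,  0,  0,  0,  0,  1,  0,  0,  0,  0,  0,  0,  0,  0,  0,  0;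
        0,  0,  0,  0,  0,  0,  0,  0,  0,  0,  0,  0,  1,  0,  0,  0,  0,  0,  0,  0,  0,  0;
        0,  0,  0,  0,  0,  0,  0,  0,  0,  0,  0,  0,  0,  1,  0,  0,  0,  0,  0,  0,  0,  0;
        0,  0,  0,  0,  0,  0,  0,  0,  0,  0,  0,  0,  0,  0,  1,  0,  0,  0,  0,  0,  0,  0;
        0,  0,  0,  0,  0,  0,  0,  0,  0,  0,  0,  0,  0,  0,  0,  1,  0,  0,  0,  0,  0,  0;
        0,  0,  0,  0,  0,  0,  0,  0,  0,  0,  0,  0,  0,  0,  0,  0,  0,  0,  1,  0,  0,  0;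
        0,  0,  0,  0,  0,  0,  0,  0,  0,  0,  0,  0,  0,  0,  0,  0,  0,  0,  0,  1,  0,  0;
        0,  0,  0,  0,  0,  0,  0,  0,  0,  0,  0,  0,  0,  0,  0,  0,  1,  0,  0,  0,  0,  0;
        0,  0,  0,  0,  0,  0,  0,  0,  0,  0,  0,  0,  0,  0,  0,  0,  0,  1,  0,  0,  0,  0]
    flatM19 flatK3

def complToK3 : Matrix K3Ix (Fin 4 ⊕ Fin 2) ℤ :=
  submatrix
    !![ 0,  0, -2,  2,  0,  0;
        0,  0, -2,  3,  0,  0;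
        0,  0, -3,  4,  0,  0;
        0,  0, -4,  6,  0,  0;
        0,  0, -3,  5,  0,  0;
        0,  0, -2,  4,  0,  0;
       -1,  0, -1,  3,  0,  0;
        0, -1,  0,  2,  0,  0;
        0,  0,  0,  0,  0,  0;
        0,  0,  0,  0,  0,  0;
        0,  0,  0,  0,  0,  0;
        0,  0,  0,  0,  0,  0;
        0,  0,  0,  0,  0,  0;
        0,  0,  0,  0,  0,  0;
        0,  0,  0,  0,  0,  0;
        0,  0,  0,  0,  0,  0;
        0,  0,  0,  0,  0,  0;
        0,  0,  0,  0,  0,  0;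
        0,  0,  0,  0,  1,  0;
        0,  0,  0,  0,  0,  1;
        0,  0,  0,  0, -1,  0;
        0,  0,  0,  0,  0, -1]
    flatK3 flatCompl

def k3ToCompl : Matrix (Fin 4 ⊕ Fin 2) K3Ix ℤ :=
  submatrix
    !![ 0,  2,  0,  0, -3,  3, -1,  0,  0,  0,  0,  0,  0,  0,  0,  0,  0,  0,  0,  0,  0,  0;
        0,  2,  0,  0, -4,  4,  0, -1,  0,  0,  0,  0,  0,  0,  0,  0,  0,  0,  0,  0,  0,  0;
        0,  1,  0,  0, -3,  3,  0,  0,  0,  0,  0,  0,  0,  0,  0,  0,  0,  0,  0,  0,  0,  0;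
        0,  1,  0,  0, -2,  2,  0,  0,  0,  0,  0,  0,  0,  0,  0,  0,  0,  0,  0,  0,  0,  0;
        0,  0,  0,  0,  0,  0,  0,  0,  0,  0,  0,  0,  0,  0,  0,  0,  0,  0,  1,  0,  0,  0;
        0,  0,  0,  0,  0,  0,  0,  0,  0,  0,  0,  0,  0,  0,  0,  0,  0,  0,  0,  1,  0,  0]
    flatCompl flatK3

/-- `projCompl = 2 (D4 ⊕ U(2))⁻¹ complToK3ᵀ K3` and `projM19 = 2 m19ToK3 M19⁻¹`: twice the
coordinates of the orthogonal projections onto the two summands, integral because both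
discriminant groups are 2-elementary. -/
def projCompl : Matrix (Fin 4 ⊕ Fin 2) K3Ix ℤ :=
  submatrix
    !![-1,  0,  0,  0,  0,  2, -2,  0,  0,  0,  0,  0,  0,  0,  0,  0,  0,  0,  0,  0,  0,  0;
       -2,  0,  0,  0,  0,  2,  0, -2,  0,  0,  0,  0,  0,  0,  0,  0,  0,  0,  0,  0,  0,  0;
       -2,  0,  0,  0,  0,  1,  0,  0,  0,  0,  0,  0,  0,  0,  0,  0,  0,  0,  0,  0,  0,  0;
       -1,  0,  0,  0,  0,  1,  0,  0,  0,  0,  0,  0,  0,  0,  0,  0,  0,  0,  0,  0,  0,  0;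
        0,  0,  0,  0,  0,  0,  0,  0,  0,  0,  0,  0,  0,  0,  0,  0,  0,  0,  1,  0, -1,  0;
        0,  0,  0,  0,  0,  0,  0,  0,  0,  0,  0,  0,  0,  0,  0,  0,  0,  0,  0,  1,  0, -1]
    flatCompl flatK3

def projM19 : Matrix K3Ix M19Ix ℤ :=
  submatrix
    !![ 0,  0,  0,  0,  0,  0,  0,  0,  0,  0,  0,  0,  0,  0,  0,  0;
        1,  2,  1,  2,  0,  0,  0,  0,  0,  0,  0,  0,  0,  0,  0,  0;
       -1,  0,  0,  1,  0,  0,  0,  0,  0,  0,  0,  0,  0,  0,  0,  0;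
        0,  0,  0,  2,  0,  0,  0,  0,  0,  0,  0,  0,  0,  0,  0,  0;
        0,  0, -1,  1,  0,  0,  0,  0,  0,  0,  0,  0,  0,  0,  0,  0;
        0,  0,  0,  0,  0,  0,  0,  0,  0,  0,  0,  0,  0,  0,  0,  0;
        0,  0,  0,  0,  0,  0,  0,  0,  0,  0,  0,  0,  0,  0,  0,  0;
        0,  0,  0,  0,  0,  0,  0,  0,  0,  0,  0,  0,  0,  0,  0,  0;
        0,  0,  0,  0,  8, 10, 14, 20, 16, 12,  8,  4,  0,  0,  0,  0;
        0,  0,  0,  0, 10, 16, 20, 30, 24, 18, 12,  6,  0,  0,  0,  0;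
        0,  0,  0,  0, 14, 20, 28, 40, 32, 24, 16,  8,  0,  0,  0,  0;
        0,  0,  0,  0, 20, 30, 40, 60, 48, 36, 24, 12,  0,  0,  0,  0;
        0,  0,  0,  0, 16, 24, 32, 48, 40, 30, 20, 10,  0,  0,  0,  0;
        0,  0,  0,  0, 12, 18, 24, 36, 30, 24, 16,  8,  0,  0,  0,  0;
        0,  0,  0,  0,  8, 12, 16, 24, 20, 16, 12,  6,  0,  0,  0,  0;
        0,  0,  0,  0,  4,  6,  8, 12, 10,  8,  6,  4,  0,  0,  0,  0;
        0,  0,  0,  0,  0,  0,  0,  0,  0,  0,  0,  0,  0,  0,  0,  2;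
        0,  0,  0,  0,  0,  0,  0,  0,  0,  0,  0,  0,  0,  0,  2,  0;
        0,  0,  0,  0,  0,  0,  0,  0,  0,  0,  0,  0,  0,  1,  0,  0;
        0,  0,  0,  0,  0,  0,  0,  0,  0,  0,  0,  0,  1,  0,  0,  0;
        0,  0,  0,  0,  0,  0,  0,  0,  0,  0,  0,  0,  0,  1,  0,  0;
        0,  0,  0,  0,  0,  0,  0,  0,  0,  0,  0,  0,  1,  0,  0,  0]
    flatK3 flatM19

theorem gram_t0ToM19 : t0ToM19ᵀ * M19 * t0ToM19 = T0 := by decide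

theorem gram_m19ToK3 : m19ToK3ᵀ * K3 * m19ToK3 = M19 := by decide

theorem k3ToM19_mul_m19ToK3 : k3ToM19 * m19ToK3 = 1 := by decide

theorem gram_complToK3 : complToK3ᵀ * K3 * complToK3 = dsum D4 ((2 : ℤ) • U) := by decide

theorem k3ToCompl_mul_complToK3 : k3ToCompl * complToK3 = 1 := by decide

theorem gram_complToK3_m19ToK3 : complToK3ᵀ * K3 * m19ToK3 = 0 := by decide

theorem two_smul_one_eq_complToK3_mul_add :
    (2 : ℤ) • 1 = complToK3 * projCompl + projM19 * (K3 * m19ToK3)ᵀ := by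
  decide

theorem natCard_quotient_range_t0ToM19 :
    Nat.card ((M19Ix → ℤ) ⧸ LinearMap.range t0ToM19.mulVecLin) = 2 := by
  have h := natCard_quotient_range_sq_mul_det (by simp) gram_t0ToM19 (by rw [det_T0]; norm_num)
  rw [det_T0, det_M19] at h
  exact Nat.pow_left_injective two_ne_zero (by zify; linarith)

/-- `(D4)³ ⊕ U²` is isometric to an index-2 sublattice of
`D4 ⊕ E8 ⊕ U(2) ⊕ U`, and `D4 ⊕ E8 ⊕ U(2) ⊕ U` admits a primitive isometric embedding into
the K3 lattice whose orthogonal complement is isometric to `D4 ⊕ U(2)`. -/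
theorem T0_index_two_in_M19_and_M19_embeds_in_K3 :
    (∃ f : (T0Ix → ℤ) →ₗ[ℤ] (M19Ix → ℤ), Function.Injective f ∧
      (∀ v w, f v ⬝ᵥ M19.mulVec (f w) = v ⬝ᵥ T0.mulVec w) ∧
      Nat.card ((M19Ix → ℤ) ⧸ LinearMap.range f) = 2) ∧
    (∃ g : (M19Ix → ℤ) →ₗ[ℤ] (K3Ix → ℤ), IsPrimitiveEmbedding M19 K3 g ∧
      ∃ e : ((Fin 4 ⊕ Fin 2) → ℤ) →ₗ[ℤ] (K3Ix → ℤ), Function.Injective e ∧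
        LinearMap.range e = orthComp K3 (LinearMap.range g : Set (K3Ix → ℤ)) ∧
        ∀ v w, e v ⬝ᵥ K3.mulVec (e w) = v ⬝ᵥ (dsum D4 ((2 : ℤ) • U)).mulVec w) :=
  ⟨⟨t0ToM19.mulVecLin,
      mulVec_injective_of_gram_det_ne_zero gram_t0ToM19 (by rw [det_T0]; norm_num),
      mulVec_dotProduct_mulVec_of_gram gram_t0ToM19, natCard_quotient_range_t0ToM19⟩,
    m19ToK3.mulVecLin, isPrimitiveEmbedding_mulVecLin gram_m19ToK3 k3ToM19_mul_m19ToK3,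
    complToK3.mulVecLin, mulVec_injective_of_mul_eq_one k3ToCompl_mul_complToK3,
    (orthComp_range_mulVecLin_eq gram_complToK3_m19ToK3 k3ToCompl_mul_complToK3 two_ne_zero
      two_smul_one_eq_complToK3_mul_add).symm,
    mulVec_dotProduct_mulVec_of_gram gram_complToK3⟩

end MaxAlg
end
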